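/- arXiv:math/0602452 — 2 statements merged into one kernel-verified Lean document; each statement's English description precedes it below -/
import Mathlib

section
/- Let p be a prime with p ∉ {2, 3}, k ≥ 1, b a positive integer with gcd(b·pᵏ, 6) = 1 and gcd(b, p) = 1, and n ≥ 1. Let τ = (τ₁, τ₂) : ℤ/b × O*ₙ → (ℤ/pᵏ)ˣ be a homomorphism such that the kernel of the restriction τ₂ : O*ₙ → (ℤ/pᵏ)ˣ equals the index-2 subgroup T*ₙ of O*ₙ generated by X, P, Q. Let q : ℤ/b × O*ₙ → ℤ/b × ℤ/2 be the homomorphism which is the identity on the first factor and the quotient map O*ₙ → O*ₙ/T*ₙ ≅ ℤ/2 on the second, and let τ̄ : ℤ/b × ℤ/2 → (ℤ/pᵏ)ˣ be the homomorphism induced by τ. Then precomposition with q gives an isomorphism Der_{τ̄}(ℤ/b × ℤ/2, ℤ/pᵏ) ≅ Der_τ(ℤ/b × O*ₙ, ℤ/pᵏ). -/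
/-- Generators `X, P, Q, R` of the generalized binary octahedral group. -/
inductive OGen : Type
  | X : OGen
  | P : OGen
  | Q : OGen
  | R : OGen
  deriving DecidableEq

open OGen FreeGroup in
/-- The relations of the generalized binary octahedral group `O*ₙ`:
`X^(3^n) = P⁴ = 1`, `P² = Q² = R²`, `PQP⁻¹ = Q⁻¹`, `XPX⁻¹ = Q`, `XQX⁻¹ = PQ`,
`RXR⁻¹ = X⁻¹`, `RPR⁻¹ = QP`, `RQR⁻¹ = Q⁻¹`. -/
def ostarRels (n : ℕ) : Set (FreeGroup OGen) :=
  { of X ^ 3 ^ n,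
    of P ^ 4,
    of P ^ 2 * (of Q ^ 2)⁻¹,
    of Q ^ 2 * (of R ^ 2)⁻¹,
    of P * of Q * (of P)⁻¹ * of Q,
    of X * of P * (of X)⁻¹ * (of Q)⁻¹,
    of X * of Q * (of X)⁻¹ * (of P * of Q)⁻¹,
    of R * of X * (of R)⁻¹ * of X,
    of R * of P * (of R)⁻¹ * (of Q * of P)⁻¹,
    of R * of Q * (of R)⁻¹ * of Q }

/-- The generalized binary octahedral group `O*ₙ`, given by the presentation above. -/
abbrev Ostar (n : ℕ) := PresentedGroup (ostarRels n)


/-- For an action `α : H → Aut A` of a group `H` on an additive abelian group `A`,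
`Der α` is the abelian group (under pointwise addition) of crossed homomorphisms
`d : H → A`, i.e. maps satisfying `d (h₁ * h₂) = d h₁ + α h₁ (d h₂)`. -/
def Der {H A : Type*} [Group H] [AddCommGroup A] (α : H →* Multiplicative (AddAut A)) :
    AddSubgroup (H → A) where
  carrier := {d | ∀ h₁ h₂ : H, d (h₁ * h₂) = d h₁ + (α h₁).toAdd (d h₂)}
  zero_mem' := by intro h₁ h₂; simp
  add_mem' := by
    intro d₁ d₂ hd₁ hd₂ h₁ h₂
    simp only [Pi.add_apply, hd₁ h₁ h₂, hd₂ h₁ h₂, map_add]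
    abel
  neg_mem' := by
    intro d hd h₁ h₂
    simp only [Pi.neg_apply, hd h₁ h₂, map_neg]
    abel

/-- A homomorphism `γ : H → (ℤ/a)ˣ` regarded as an action of `H` on `ℤ/a`
by multiplication. -/
def unitsAction {H : Type*} [Group H] {a : ℕ} (γ : H →* (ZMod a)ˣ) :
    H →* Multiplicative (AddAut (ZMod a)) :=
  (DistribMulAction.toAddAut (ZMod a)ˣ (ZMod a)).comp γ

/-! If the action is trivial on `g` and `g ^ m = 1`, a crossed homomorphism `d` satisfies
`m • d g = d (g ^ m) = 0`. The generators `X, P, Q` of `T*ₙ` have orders dividing `3ⁿ` and `4`,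
which are prime to `pᵏ`, and the action is trivial on `T*ₙ` because `τ` factors through `q`;
so every crossed homomorphism vanishes on `T*ₙ = ker q`, is therefore constant on the fibres of
the surjection `q`, and descends uniquely along it. -/

namespace Der

variable {H K A : Type*} [Group H] [Group K] [AddCommGroup A]

section

variable {α : H →* Multiplicative (AddAut A)} {d : H → A}

lemma map_one (hd : d ∈ Der α) : d 1 = 0 := by
  simpa using hd 1 1

lemma map_pow_of_eq_one (hd : d ∈ Der α) {g : H} (hg : α g = 1) (m : ℕ) :
    d (g ^ m) = m • d g := by
  induction m with
  | zero => simpa using map_one hd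
  | succ m ih => rw [pow_succ, hd, ih, map_pow, hg, one_pow, toAdd_one, AddAut.zero_apply,
      succ_nsmul]

lemma eq_zero_of_pow_eq_one (hd : d ∈ Der α) {g : H} (hg : α g = 1) {m : ℕ} (hgm : g ^ m = 1)
    (hm : ∀ a : A, m • a = 0 → a = 0) : d g = 0 :=
  hm _ (by rw [← map_pow_of_eq_one hd hg, hgm, map_one hd])

lemma map_mul_of_eq_zero (hd : d ∈ Der α) (g : H) {g' : H} (hg' : d g' = 0) :
    d (g * g') = d g := by
  rw [hd, hg', map_zero, add_zero]

def ker (hd : d ∈ Der α) : Subgroup H where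
  carrier := {g | d g = 0}
  one_mem' := map_one hd
  mul_mem' {g g'} hg hg' := by
    simp only [Set.mem_ofPred_eq] at *
    rw [map_mul_of_eq_zero hd g hg', hg]
  inv_mem' {g} hg := by
    simp only [Set.mem_ofPred_eq] at *
    have h := hd g g⁻¹
    rw [mul_inv_cancel, map_one hd, hg, zero_add, eq_comm] at h
    exact (α g).toAdd.map_eq_zero_iff.mp h

lemma comp_mem (hd : d ∈ Der α) (f : K →* H) : d ∘ f ∈ Der (α.comp f) :=
  fun g g' => by rw [Function.comp_apply, map_mul]; exact hd _ _

end

variable {q : H →* K} {β : K →* Multiplicative (AddAut A)}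

def comap (q : H →* K) (β : K →* Multiplicative (AddAut A)) : Der β →+ Der (β.comp q) where
  toFun d := ⟨d ∘ q, comp_mem d.2 q⟩
  map_zero' := rfl
  map_add' _ _ := rfl

lemma comap_injective (hq : Function.Surjective q) : Function.Injective (comap q β) := by
  intro d₁ d₂ h
  ext y
  obtain ⟨g, rfl⟩ := hq y
  exact congrFun (congrArg Subtype.val h) g

lemma eq_of_map_eq {d : H → A} (hd : d ∈ Der (β.comp q)) (hker : ∀ g ∈ q.ker, d g = 0)
    {g g' : H} (h : q g = q g') : d g = d g' := by
  have hmem : g⁻¹ * g' ∈ q.ker := by rw [MonoidHom.mem_ker, map_mul, map_inv, h, inv_mul_cancel]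
  rw [← map_mul_of_eq_zero hd g (hker _ hmem), mul_inv_cancel_left]

lemma comap_surjective (hq : Function.Surjective q)
    (hker : ∀ d ∈ Der (β.comp q), ∀ g ∈ q.ker, d g = 0) : Function.Surjective (comap q β) := by
  intro d
  let s := Function.surjInv hq
  have hs : ∀ y, q (s y) = y := Function.surjInv_eq hq
  have hfib {g g' : H} (h : q g = q g') : (d : H → A) g = (d : H → A) g' :=
    eq_of_map_eq d.2 (hker d d.2) h
  refine ⟨⟨d ∘ s, fun y₁ y₂ => ?_⟩, ?_⟩
  · have h := d.2 (s y₁) (s y₂)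
    simp only [MonoidHom.comp_apply, hs] at h
    rw [Function.comp_apply, hfib (g' := s y₁ * s y₂) (by rw [map_mul, hs, hs, hs]), h]
    rfl
  · ext g
    exact hfib (hs (q g))

noncomputable def comapEquiv (hq : Function.Surjective q)
    (hker : ∀ d ∈ Der (β.comp q), ∀ g ∈ q.ker, d g = 0) : Der β ≃+ Der (β.comp q) :=
  AddEquiv.ofBijective (comap q β) ⟨comap_injective hq, comap_surjective hq hker⟩

end Der

lemma unitsAction_eq_one {H : Type*} [Group H] {a : ℕ} {γ : H →* (ZMod a)ˣ} {g : H}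
    (h : γ g = 1) : unitsAction γ g = 1 := by
  rw [unitsAction, MonoidHom.comp_apply, h, map_one]

lemma ZMod.eq_zero_of_nsmul_eq_zero {N m : ℕ} (hm : m.Coprime N) {a : ZMod N} (h : m • a = 0) :
    a = 0 := by
  rw [nsmul_eq_mul] at h
  exact ((ZMod.isUnit_iff_coprime m N).mpr hm).mul_right_eq_zero.mp h

namespace Ostar

open OGen PresentedGroup

variable {n : ℕ}

def Tstar (n : ℕ) : Subgroup (Ostar n) := Subgroup.closure {of X, of P, of Q}

lemma X_pow : (of X : Ostar n) ^ 3 ^ n = 1 :=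
  one_of_mem (x := FreeGroup.of X ^ 3 ^ n) (by simp [ostarRels])

lemma P_pow_four : (of P : Ostar n) ^ 4 = 1 :=
  one_of_mem (x := FreeGroup.of P ^ 4) (by simp [ostarRels])

lemma Q_sq : (of Q : Ostar n) ^ 2 = of P ^ 2 :=
  (mk_eq_mk_of_mul_inv_mem (x := FreeGroup.of P ^ 2) (by simp [ostarRels])).symm

lemma Q_pow_four : (of Q : Ostar n) ^ 4 = 1 := by
  rw [show 4 = 2 * 2 from rfl, pow_mul, Q_sq, ← pow_mul, P_pow_four]

lemma der_eq_zero_of_mem_Tstar {N : ℕ} (hN : N.Coprime 6)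
    {α : Ostar n →* Multiplicative (AddAut (ZMod N))} (hα : ∀ t ∈ Tstar n, α t = 1)
    {d : Ostar n → ZMod N} (hd : d ∈ Der α) {t : Ostar n} (ht : t ∈ Tstar n) : d t = 0 := by
  have h2 : (2 ^ 2).Coprime N := (hN.coprime_dvd_right (by norm_num)).symm.pow_left 2
  have h3 : (3 ^ n).Coprime N := (hN.coprime_dvd_right (by norm_num)).symm.pow_left n
  have hgen : {of X, of P, of Q} ⊆ (Der.ker hd : Set (Ostar n)) := by
    rintro g (rfl | rfl | rfl) <;> apply Der.eq_zero_of_pow_eq_one hd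
      (hα _ (Subgroup.subset_closure (by simp)))
    exacts [X_pow, fun _ => ZMod.eq_zero_of_nsmul_eq_zero h3,
      P_pow_four, fun _ => ZMod.eq_zero_of_nsmul_eq_zero h2,
      Q_pow_four, fun _ => ZMod.eq_zero_of_nsmul_eq_zero h2]
  exact (Subgroup.closure_le _).mpr hgen ht

end Ostar

open Ostar in
theorem der_iso_of_ker_eq_Tstar_general (p : ℕ)
    (k : ℕ) (b : ℕ) (h6 : Nat.gcd (b * p ^ k) 6 = 1)
    (n : ℕ)
    (τ : Multiplicative (ZMod b) × Ostar n →* (ZMod (p ^ k))ˣ)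
    (q₂ : Ostar n →* Multiplicative (ZMod 2)) (hq₂ : Function.Surjective q₂)
    (hq₂ker : ∀ t : Ostar n,
      q₂ t = 1 ↔ t ∈ Subgroup.closure {PresentedGroup.of OGen.X,
        PresentedGroup.of OGen.P, PresentedGroup.of OGen.Q})
    (τbar : Multiplicative (ZMod b) × Multiplicative (ZMod 2) →* (ZMod (p ^ k))ˣ)
    (hτbar : τbar.comp
      (MonoidHom.prodMap (MonoidHom.id (Multiplicative (ZMod b))) q₂) = τ) :
    ∃ e : Der (unitsAction τbar) ≃+ Der (unitsAction τ),
      ∀ (d : Der (unitsAction τbar)) (w : Multiplicative (ZMod b) × Ostar n),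
        (e d : Multiplicative (ZMod b) × Ostar n → ZMod (p ^ k)) w =
          (d : Multiplicative (ZMod b) × Multiplicative (ZMod 2) → ZMod (p ^ k))
            (w.1, q₂ w.2) := by
  subst hτbar
  set q := MonoidHom.prodMap (MonoidHom.id (Multiplicative (ZMod b))) q₂
  have hq : Function.Surjective q := Function.surjective_id.prodMap hq₂
  have hvanish : ∀ d ∈ Der ((unitsAction τbar).comp q), ∀ g ∈ q.ker, d g = 0 := by
    rintro d hd ⟨a, t⟩ hg
    obtain ⟨ha : a = 1, ht : q₂ t = 1⟩ := Prod.mk_eq_one.mp hg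
    rw [ha]
    refine der_eq_zero_of_mem_Tstar (Nat.Coprime.coprime_mul_left h6) (fun t' ht' => ?_)
      (Der.comp_mem hd (MonoidHom.inr _ _)) ((hq₂ker t).mp ht)
    exact unitsAction_eq_one (by simp [q, (hq₂ker t').mpr ht', Prod.mk_one_one])
  exact ⟨Der.comapEquiv hq hvanish, fun _ _ => rfl⟩

/-- Let p ∉ {2,3} be a prime, k ≥ 1, b with gcd(b·pᵏ,6) = 1 and gcd(b,p) = 1, n ≥ 1.
Let τ : ℤ/b × O*ₙ → (ℤ/pᵏ)ˣ be a homomorphism whose restriction τ₂ to O*ₙ has kernel the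
index-2 subgroup T*ₙ generated by X, P, Q; let q₂ : O*ₙ → ℤ/2 be the quotient map by T*ₙ
(i.e. the surjection with kernel T*ₙ), q := id × q₂, and let τ̄ : ℤ/b × ℤ/2 → (ℤ/pᵏ)ˣ be
the homomorphism induced by τ (i.e. τ̄ ∘ q = τ). Then precomposition with q gives an
isomorphism Der_{τ̄}(ℤ/b × ℤ/2, ℤ/pᵏ) ≅ Der_τ(ℤ/b × O*ₙ, ℤ/pᵏ). -/
theorem der_iso_of_ker_eq_Tstar (p : ℕ) (hp : p.Prime) (hp2 : p ≠ 2) (hp3 : p ≠ 3)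
    (k : ℕ) (hk : 1 ≤ k) (b : ℕ) (hb : 0 < b) (h6 : Nat.gcd (b * p ^ k) 6 = 1)
    (hbp : Nat.Coprime b p) (n : ℕ) (hn : 1 ≤ n)
    (τ : Multiplicative (ZMod b) × Ostar n →* (ZMod (p ^ k))ˣ)
    (hker : ∀ t : Ostar n,
      τ (1, t) = 1 ↔ t ∈ Subgroup.closure {PresentedGroup.of OGen.X,
        PresentedGroup.of OGen.P, PresentedGroup.of OGen.Q})
    (q₂ : Ostar n →* Multiplicative (ZMod 2)) (hq₂ : Function.Surjective q₂)
    (hq₂ker : ∀ t : Ostar n,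
      q₂ t = 1 ↔ t ∈ Subgroup.closure {PresentedGroup.of OGen.X,
        PresentedGroup.of OGen.P, PresentedGroup.of OGen.Q})
    (τbar : Multiplicative (ZMod b) × Multiplicative (ZMod 2) →* (ZMod (p ^ k))ˣ)
    (hτbar : τbar.comp
      (MonoidHom.prodMap (MonoidHom.id (Multiplicative (ZMod b))) q₂) = τ) :
    ∃ e : Der (unitsAction τbar) ≃+ Der (unitsAction τ),
      ∀ (d : Der (unitsAction τbar)) (w : Multiplicative (ZMod b) × Ostar n),
        (e d : Multiplicative (ZMod b) × Ostar n → ZMod (p ^ k)) w =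
          (d : Multiplicative (ZMod b) × Multiplicative (ZMod 2) → ZMod (p ^ k))
            (w.1, q₂ w.2) :=
  der_iso_of_ker_eq_Tstar_general p k b h6 n τ q₂ hq₂ hq₂ker τbar hτbar
end

section
/- Let n ≥ 1 and let a be a positive integer with gcd(a, 6) = 1. Then for every group homomorphism τ₂ : O*ₙ → (ℤ/a)ˣ and every automorphism φ of O*ₙ, one has τ₂ ∘ φ = τ₂; that is, Aut_{τ₂}(O*ₙ) := {φ ∈ Aut(O*ₙ) : τ₂ ∘ φ = τ₂} equals all of Aut(O*ₙ). -/
/-! Every homomorphism `f` from `O*ₙ` to a commutative group kills `X`, `P` and `Q` (the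
relations force `X² = X^(3^n) = 1` and `P = Q = 1`) and sends `R` to an element `u` with `u² = 1`,
so it takes only the values `1` and `u` and is determined by `f R`. For an automorphism `φ`,
either `f (φ R) = f R`, or `f (φ R) = 1`, in which case `f ∘ φ` and hence `f` is trivial. -/

lemma eq_one_or_eq_of_mem_zpowers {G : Type*} [Group G] {u g : G} (hu : u ^ 2 = 1)
    (hg : g ∈ Subgroup.zpowers u) : g = 1 ∨ g = u := by
  obtain ⟨k, rfl⟩ := Subgroup.mem_zpowers_iff.mp hg
  rcases Int.even_or_odd' k with ⟨m, rfl | rfl⟩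
  · left
    rw [zpow_mul, zpow_ofNat, hu, one_zpow]
  · right
    rw [zpow_add_one, zpow_mul, zpow_ofNat, hu, one_zpow, one_mul]

lemma eq_one_of_pow_eq_one_of_coprime {G : Type*} [Group G] {x : G} {k m : ℕ}
    (hkm : k.Coprime m) (hk : x ^ k = 1) (hm : x ^ m = 1) : x = 1 :=
  orderOf_eq_one_iff.mp <|
    Nat.eq_one_of_dvd_coprimes hkm (orderOf_dvd_of_pow_eq_one hk) (orderOf_dvd_of_pow_eq_one hm)

namespace Ostar

open OGen

variable {n : ℕ}

lemma of_X_pow : (.of X : Ostar n) ^ 3 ^ n = 1 :=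
  PresentedGroup.one_of_mem (x := FreeGroup.of X ^ 3 ^ n) (by simp [ostarRels])

lemma of_Q_sq : (.of Q : Ostar n) ^ 2 = .of R ^ 2 :=
  PresentedGroup.mk_eq_mk_of_mul_inv_mem (y := FreeGroup.of R ^ 2) (by simp [ostarRels])

lemma conj_X_P : (.of X * .of P * (.of X)⁻¹ : Ostar n) = .of Q :=
  PresentedGroup.mk_eq_mk_of_mul_inv_mem (y := FreeGroup.of Q) (by simp [ostarRels])

lemma conj_X_Q : (.of X * .of Q * (.of X)⁻¹ : Ostar n) = .of P * .of Q :=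
  PresentedGroup.mk_eq_mk_of_mul_inv_mem (y := FreeGroup.of P * FreeGroup.of Q)
    (by simp [ostarRels])

lemma conj_R_X : (.of R * .of X * (.of R)⁻¹ : Ostar n) = (.of X)⁻¹ :=
  PresentedGroup.mk_eq_mk_of_mul_inv_mem (y := (FreeGroup.of X)⁻¹) (by simp [ostarRels])

section CommGroup

variable {M : Type*} [CommGroup M] (f : Ostar n →* M)

lemma map_of_X : f (.of X) = 1 := by
  have h2 : f (.of X) ^ 2 = 1 := by
    have h := congrArg f (conj_R_X (n := n))
    rw [map_mul, map_mul, map_inv, map_inv, mul_inv_cancel_comm] at h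
    rw [pow_two, ← eq_inv_iff_mul_eq_one]
    exact h
  refine eq_one_of_pow_eq_one_of_coprime (k := 2) (m := 3 ^ n)
    (Nat.Coprime.pow_right n (by norm_num)) h2 ?_
  rw [← map_pow, of_X_pow, map_one]

lemma map_of_P : f (.of P) = 1 := by
  have h := congrArg f (conj_X_Q (n := n))
  rw [map_mul, map_mul, map_inv, mul_inv_cancel_comm, map_mul] at h
  exact right_eq_mul.mp h

lemma map_of_Q : f (.of Q) = 1 := by
  have h := congrArg f (conj_X_P (n := n))
  rw [map_mul, map_mul, map_inv, mul_inv_cancel_comm, map_of_P] at h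
  exact h.symm

lemma map_of_R_sq : f (.of R) ^ 2 = 1 := by
  rw [← map_pow, ← of_Q_sq, map_pow, map_of_Q, one_pow]

lemma hom_ext_of_R {f g : Ostar n →* M} (h : f (.of R) = g (.of R)) : f = g :=
  PresentedGroup.ext <| by
    rintro (_ | _ | _ | _) <;> simp only [map_of_X, map_of_P, map_of_Q, h]

lemma map_mem_zpowers (x : Ostar n) : f x ∈ Subgroup.zpowers (f (.of R)) :=
  PresentedGroup.generated_by _ ((Subgroup.zpowers _).comap f) (by
    rintro (_ | _ | _ | _) <;>
      simp [map_of_X, map_of_P, map_of_Q, Subgroup.mem_zpowers]) x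

theorem comp_mulAut_eq_self (φ : MulAut (Ostar n)) : f.comp φ.toMonoidHom = f := by
  apply hom_ext_of_R
  rcases eq_one_or_eq_of_mem_zpowers (map_of_R_sq f) (map_mem_zpowers f (φ (.of R))) with h | h
  · have hfφ : f.comp φ.toMonoidHom = 1 := hom_ext_of_R h
    have hf : f = 1 := MonoidHom.ext fun x => by
      simpa using DFunLike.congr_fun hfφ (φ.symm x)
    simp [hf]
  · exact h

end CommGroup

end Ostar

theorem autFix_Ostar_eq_top_general (n : ℕ) (a : ℕ) (τ₂ : Ostar n →* (ZMod a)ˣ) (φ : MulAut (Ostar n)) :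
    ∀ g : Ostar n, τ₂ (φ g) = τ₂ g :=
  DFunLike.congr_fun (Ostar.comp_mulAut_eq_self τ₂ φ)

/-- Let n ≥ 1 and gcd(a,6) = 1. For every homomorphism τ₂ : O*ₙ → (ℤ/a)ˣ and every
automorphism φ of O*ₙ, one has τ₂ ∘ φ = τ₂; that is,
Aut_{τ₂}(O*ₙ) = {φ ∈ Aut(O*ₙ) : τ₂ ∘ φ = τ₂} is all of Aut(O*ₙ). -/
theorem autFix_Ostar_eq_top (n : ℕ) (hn : 1 ≤ n) (a : ℕ) (ha : 0 < a)
    (h6 : Nat.gcd a 6 = 1) (τ₂ : Ostar n →* (ZMod a)ˣ) (φ : MulAut (Ostar n)) :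
    ∀ g : Ostar n, τ₂ (φ g) = τ₂ g :=
  autFix_Ostar_eq_top_general n a τ₂ φ
end
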